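/- Let S ⊆ ℍ have the full cone property. Then there exist α > 0 and a rotation R of ℝ³ around the z-axis such that R(S) has the α-flat cone property. -/

import Mathlib

open Set

noncomputable section

/-- The first Heisenberg group as ℝ³. -/
abbrev H : Type := ℝ × ℝ × ℝ

/-- Heisenberg group multiplication. -/
def Hmul (p q : H) : H :=
  (p.1 + q.1, p.2.1 + q.2.1, p.2.2 + q.2.2 + (p.1 * q.2.1 - q.1 * p.2.1) / 2)

/-- Heisenberg group inverse. -/
def Hinv (p : H) : H := (-p.1, -p.2.1, -p.2.2)

/-- Left translation of a set: `pE = {pe : e ∈ E}`. -/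
def LTrans (p : H) (E : Set H) : Set H := Hmul p '' E

/-- The α-flat cone `fC(α) = {(x,y,0) : |y| < α|x|}`. -/
def fC (α : ℝ) : Set H := {p | |p.2.1| < α * |p.1| ∧ p.2.2 = 0}

/-- The α-full cone `C(α) = {(x,y,z) : |y| < α|x|, |z| < αx²/2}`. -/
def fullC (α : ℝ) : Set H := {p | |p.2.1| < α * |p.1| ∧ |p.2.2| < α * p.1 ^ 2 / 2}

/-- The truncated full cone `C(β,r)`. -/
def truncC (β r : ℝ) : Set H :=
  {p | |p.2.1| < β * |p.1| ∧ |p.2.2| < β * p.1 ^ 2 / 2 ∧ |p.1| < r}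

/-- The vertical set `vC(β,r) = {(x,0,ux²/2) : |u| < β, |x| < r}`. -/
def vC (β r : ℝ) : Set H :=
  {p | ∃ u x : ℝ, |u| < β ∧ |x| < r ∧ p = (x, 0, u * x ^ 2 / 2)}

/-- The shear map `M_t(x,y,z) = (x, y + tx, z)`. -/
def Mmap (t : ℝ) (p : H) : H := (p.1, p.2.1 + t * p.1, p.2.2)

/-- The projection `π(x,y,z) = (y, z + xy/2)`. -/
def proj (p : H) : ℝ × ℝ := (p.2.1, p.2.2 + p.1 * p.2.1 / 2)

/-- The intrinsic graph of `φ` over `Ω`. -/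
def IGraph (Ω : Set (ℝ × ℝ)) (φ : ℝ × ℝ → ℝ) : Set H :=
  (fun w => (φ w, w.1, w.2 - w.1 * φ w / 2)) '' Ω

/-- The α-flat cone property. -/
def FlatConeProp (α : ℝ) (S : Set H) : Prop :=
  ∀ p ∈ S, fC α ∩ LTrans (Hinv p) S = ∅

/-- A topological surface: every point of `S` has an open neighborhood in `S`
homeomorphic to `ℝ²`. -/
def IsTopSurface (S : Set H) : Prop :=
  ∀ p : S, ∃ U : Set S, IsOpen U ∧ p ∈ U ∧ Nonempty (U ≃ₜ (ℝ × ℝ))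

/-- Dilations `δ_λ(x,y,z) = (λx, λy, λ²z)`. -/
def dil (l : ℝ) (p : H) : H := (l * p.1, l * p.2.1, l ^ 2 * p.2.2)

/-- A cone is a set invariant under all dilations. -/
def IsCone (E : Set H) : Prop := ∀ l : ℝ, 0 < l → dil l '' E = E

/-- Rotation around the z-axis by angle θ. -/
def Rot (θ : ℝ) (p : H) : H :=
  (p.1 * Real.cos θ - p.2.1 * Real.sin θ, p.1 * Real.sin θ + p.2.1 * Real.cos θ, p.2.2)

/-!
Rotations about the `z`-axis are group automorphisms of `ℍ` commuting with dilations and with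
`p ↦ -p`, so rotating `S` together with the cone `C` preserves the full cone property. Since `S`
is nonempty (otherwise there is nothing to prove) and `0 = p⁻¹p ∈ p⁻¹S`, the horizontal point of
`C` is not the origin, and a rotation moves it onto the positive `x`-axis. Being open, the rotated
cone contains a ball around that point; its dilates and their negatives cover a flat cone `fC α`.
-/

lemma Hinv_mul_cancel (p : H) : Hmul (Hinv p) p = 0 := by
  obtain ⟨x, y, z⟩ := p
  simp only [Hmul, Hinv, Prod.mk_eq_zero]
  exact ⟨by ring, by ring, by ring⟩

lemma Rot_neg_Rot (θ : ℝ) (p : H) : Rot (-θ) (Rot θ p) = p := by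
  obtain ⟨x, y, z⟩ := p
  have h := Real.sin_sq_add_cos_sq θ
  simp only [Rot, Real.cos_neg, Real.sin_neg, Prod.mk.injEq]
  exact ⟨by linear_combination x * h, by linear_combination y * h, trivial⟩

lemma Rot_Hmul (θ : ℝ) (p q : H) : Rot θ (Hmul p q) = Hmul (Rot θ p) (Rot θ q) := by
  obtain ⟨x, y, z⟩ := p
  obtain ⟨x', y', z'⟩ := q
  have h := Real.sin_sq_add_cos_sq θ
  simp only [Rot, Hmul, Prod.mk.injEq]
  exact ⟨by ring, by ring, by linear_combination (-(x * y' - x' * y) / 2) * h⟩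

lemma Rot_Hinv (θ : ℝ) (p : H) : Rot θ (Hinv p) = Hinv (Rot θ p) := by
  simp only [Rot, Hinv, Prod.mk.injEq]
  exact ⟨by ring, by ring, trivial⟩

lemma Rot_neg (θ : ℝ) (p : H) : Rot θ (-p) = -Rot θ p := by
  simp only [Rot, Prod.fst_neg, Prod.snd_neg, Prod.neg_mk, Prod.mk.injEq]
  exact ⟨by ring, by ring, trivial⟩

lemma Rot_dil (θ l : ℝ) (p : H) : Rot θ (dil l p) = dil l (Rot θ p) := by
  simp only [Rot, dil, Prod.mk.injEq]
  exact ⟨by ring, by ring, trivial⟩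

lemma continuous_Rot (θ : ℝ) : Continuous (Rot θ) := by
  unfold Rot
  fun_prop

lemma exists_Rot_eq_pos_xAxis (a b z : ℝ) (hab : (a, b) ≠ 0) :
    ∃ θ, ∃ r > 0, Rot θ (a, b, z) = (r, 0, z) := by
  set w : ℂ := ⟨a, b⟩
  have hw : w ≠ 0 := fun h => hab (by simpa [Complex.ext_iff, w] using h)
  have hr : 0 < ‖w‖ := norm_pos_iff.mpr hw
  have hnorm : ‖w‖ ^ 2 = a ^ 2 + b ^ 2 := by
    rw [Complex.sq_norm, Complex.normSq_mk]
    ring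
  refine ⟨-w.arg, ‖w‖, hr, ?_⟩
  simp only [Rot, Real.cos_neg, Real.sin_neg, Complex.cos_arg hw, Complex.sin_arg, Prod.mk.injEq]
  refine ⟨?_, by ring, trivial⟩
  field_simp
  linear_combination -hnorm

lemma FlatConeProp.of_subset {α : ℝ} {C S : Set H} (hsub : fC α ⊆ C)
    (hCS : ∀ p ∈ S, C ∩ LTrans (Hinv p) S = ∅) : FlatConeProp α S :=
  fun p hp => subset_eq_empty (inter_subset_inter_left _ hsub) (hCS p hp)

lemma inter_LTrans_Rot_image_eq_empty {C S : Set H} (θ : ℝ)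
    (hCS : ∀ p ∈ S, C ∩ LTrans (Hinv p) S = ∅) :
    ∀ p ∈ Rot θ '' S, Rot (-θ) ⁻¹' C ∩ LTrans (Hinv p) (Rot θ '' S) = ∅ := by
  rintro _ ⟨p, hp, rfl⟩
  refine eq_empty_of_forall_notMem ?_
  rintro _ ⟨hC, _, ⟨s, hs, rfl⟩, rfl⟩
  rw [← Rot_Hinv, ← Rot_Hmul, mem_preimage, Rot_neg_Rot] at hC
  exact (hCS p hp).subset ⟨hC, s, hs, rfl⟩

lemma exists_fC_subset {E : Set H} (hE : IsOpen E) (hdil : ∀ l > 0, ∀ p ∈ E, dil l p ∈ E)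
    (hneg : ∀ p ∈ E, -p ∈ E) {r : ℝ} (hr : 0 < r) (hrE : ((r, 0, 0) : H) ∈ E) :
    ∃ α > 0, fC α ⊆ E := by
  have h1E : ((1, 0, 0) : H) ∈ E := by
    simpa [dil, hr.ne'] using hdil r⁻¹ (inv_pos.mpr hr) _ hrE
  obtain ⟨ε, hε, hball⟩ := Metric.isOpen_iff.mp hE _ h1E
  have hpos : ∀ x y : ℝ, 0 < x → |y| < ε * x → ((x, y, 0) : H) ∈ E := by
    intro x y hx hy
    have hmem : ((1, y / x, 0) : H) ∈ E := by
      apply hball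
      simp only [Metric.mem_ball, Prod.dist_eq, dist_self, Real.dist_eq, sub_zero, abs_div,
        abs_of_pos hx, max_lt_iff]
      exact ⟨hε, (div_lt_iff₀ hx).mpr (by linarith), hε⟩
    simpa [dil, mul_div_cancel₀ y hx.ne'] using hdil x hx _ hmem
  refine ⟨ε, hε, ?_⟩
  rintro ⟨x, y, z⟩ ⟨hy, rfl : z = 0⟩
  rcases lt_trichotomy x 0 with hx | rfl | hx
  · simpa using hneg _ (hpos (-x) (-y) (by linarith) (by rwa [abs_neg, ← abs_of_neg hx]))
  · exact absurd hy (by simp)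
  · exact hpos x y hx (by rwa [← abs_of_pos hx])

theorem stmt11 (S : Set H)
    (h : ∃ C : Set H, IsOpen C ∧ IsCone C ∧ (∀ p : H, p ∈ C ↔ -p ∈ C) ∧
      (C ∩ {p : H | p.2.2 = 0}).Nonempty ∧ ∀ p ∈ S, C ∩ LTrans (Hinv p) S = ∅) :
    ∃ α > 0, ∃ θ : ℝ, FlatConeProp α (Rot θ '' S) := by
  obtain ⟨C, hCo, hCc, hCneg, ⟨⟨a, b, z⟩, hqC, rfl : z = 0⟩, hCS⟩ := h
  rcases S.eq_empty_or_nonempty with rfl | ⟨p, hp⟩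
  · exact ⟨1, one_pos, 0, by simp [FlatConeProp]⟩
  have hab : (a, b) ≠ 0 := by
    rintro ⟨⟩
    exact (hCS p hp).subset ⟨hqC, p, hp, Hinv_mul_cancel p⟩
  obtain ⟨θ, r, hr, hrot⟩ := exists_Rot_eq_pos_xAxis a b 0 hab
  have hdil : ∀ l > 0, ∀ q ∈ Rot (-θ) ⁻¹' C, dil l q ∈ Rot (-θ) ⁻¹' C := fun l hl q hq => by
    rw [mem_preimage, Rot_dil, ← hCc l hl]
    exact mem_image_of_mem _ hq
  have hneg : ∀ q ∈ Rot (-θ) ⁻¹' C, -q ∈ Rot (-θ) ⁻¹' C := fun q hq => by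
    rwa [mem_preimage, Rot_neg, ← hCneg]
  have hrC : ((r, 0, 0) : H) ∈ Rot (-θ) ⁻¹' C := by
    rwa [← hrot, mem_preimage, Rot_neg_Rot]
  obtain ⟨α, hα, hsub⟩ := exists_fC_subset (hCo.preimage (continuous_Rot _)) hdil hneg hr hrC
  exact ⟨α, hα, θ, .of_subset hsub (inter_LTrans_Rot_image_eq_empty θ hCS)⟩
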